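/- arXiv:0803.0804 — 2 statements merged into one kernel-verified Lean document; each statement's English description precedes it below -/
import Mathlib

section
/- (Theorem 3, family $U_2$) Assume $(\varrho_n)_{n \in \mathbb{Z}}$ is summable. For every constant $C \ge 0$, the function $u : G_k \to \mathbb{R}$ defined by $u(x) = C \cdot \Sigma^+(\phi(x)) = C \sum_{s \ge \phi(x)} \varrho_s$ is $H_{ij}$-periodic and $p$-harmonic on the Cayley tree: $\Delta_p u(x) = 0$ for all $x \in G_k$, and $u(yx) = u(x)$ for all $y \in H_{ij}$, $x \in G_k$. -/
open scoped BigOperators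

noncomputable section

/-- The group representation `G_k` of the Cayley tree of order `k`:
the free product of `k+1` copies of the cyclic group of order two. -/
abbrev G (k : ℕ) : Type := Monoid.CoprodI (fun _ : Fin (k + 1) => Multiplicative (ZMod 2))

/-- The generators `a_0, ..., a_k` of `G_k`. -/
def gen (k : ℕ) (s : Fin (k + 1)) : G k :=
  Monoid.CoprodI.of (i := s) (Multiplicative.ofAdd (1 : ZMod 2))

/-- `φ_p(t) = |t|^(p-2) t` (real powers). -/
noncomputable def phiP (p t : ℝ) : ℝ := |t| ^ (p - 2) * t

/-- The discrete `p`-Laplacian on the Cayley tree with resistances `r`: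
`Δ_p u (x) = ∑_{s=0}^{k} φ_p ((u (x a_s) - u x) / r (x, x a_s))`. -/
noncomputable def pLap (k : ℕ) (p : ℝ) (r : G k × G k → ℝ) (u : G k → ℝ) (x : G k) : ℝ :=
  ∑ s : Fin (k + 1), phiP p ((u (x * gen k s) - u x) / r (x, x * gen k s))

/-- A function `u : G_k → ℝ` is `H`-periodic if `u (y x) = u x` for all `y ∈ H`, `x ∈ G_k`. -/
def IsPeriodic (k : ℕ) (H : Subgroup (G k)) (u : G k → ℝ) : Prop :=
  ∀ y ∈ H, ∀ x : G k, u (y * x) = u x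

/-- The coset index `φ(x) = ρ(x)(0)` associated to a permutation action `ρ` of `G_k` on `ℤ`. -/
def cosetIdx {k : ℕ} (ρ : G k →* Equiv.Perm ℤ) (x : G k) : ℤ := ρ x 0

/-!
Each generator acts on `ℤ` by a map `n ↦ ±n + c`, hence so does every `ρ x`, namely
`n ↦ ±n + φ(x)`. Thus the neighbours `x a_i`, `x a_j` have indices `φ(x) ± 1` in one order or
the other, and all other neighbours have index `φ(x)`. As `Σ⁺(n) - Σ⁺(n+1) = ϱ_n` is the
resistance of the edge from level `n` to level `n+1`, the gradient of `u` is `-C` along the edge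
going up and `C` along the edge going down, and the two terms cancel because `φ_p` is odd.
Periodicity holds because `ρ ∘ f = ρ` on the generators, so `ker f ≤ ker ρ`.
-/

theorem closure_range_gen (k : ℕ) : Submonoid.closure (Set.range (gen k)) = ⊤ := by
  refine (Submonoid.eq_top_iff' _).2 fun x => ?_
  induction x using Monoid.CoprodI.induction_on with
  | one => exact one_mem _
  | of s m =>
    have hm : ∀ m : Multiplicative (ZMod 2), m = 1 ∨ m = Multiplicative.ofAdd 1 := by decide
    rcases hm m with rfl | rfl
    · simp
    · exact Submonoid.subset_closure ⟨s, rfl⟩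
  | mul x y hx hy => exact mul_mem hx hy

theorem phiP_neg (p t : ℝ) : phiP p (-t) = -phiP p t := by
  rw [phiP, phiP, abs_neg, mul_neg]

def tailSum (ϱ : ℤ → ℝ) (n : ℤ) : ℝ := ∑' m : {m : ℤ // n ≤ m}, ϱ m

theorem tailSum_eq_add_tailSum_succ {ϱ : ℤ → ℝ} (hϱ : Summable ϱ) (n : ℤ) :
    tailSum ϱ n = ϱ n + tailSum ϱ (n + 1) := by
  have hsplit : Set.Ici n = {n} ∪ Set.Ici (n + 1) := by
    ext m; simp only [Set.mem_Ici, Set.mem_union, Set.mem_singleton_iff]; omega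
  have hdisj : Disjoint ({n} : Set ℤ) (Set.Ici (n + 1)) := by simp
  change ∑' m : Set.Ici n, ϱ m = ϱ n + ∑' m : Set.Ici (n + 1), ϱ m
  rw [hsplit, Summable.tsum_union_disjoint hdisj (hϱ.subtype _) (hϱ.subtype _), tsum_singleton]

section Slope

variable {α : Type*} {ϱ : ℤ → ℝ} {idx : α → ℤ} {r : α × α → ℝ}

theorem tailSum_slope_of_succ (hϱ : Summable ϱ) (hϱ0 : ∀ n, ϱ n ≠ 0)
    (hr : ∀ x y, idx y = idx x + 1 → r (x, y) = ϱ (idx x)) (C : ℝ) {x y : α}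
    (hxy : idx y = idx x + 1) :
    (C * tailSum ϱ (idx y) - C * tailSum ϱ (idx x)) / r (x, y) = -C := by
  rw [hr x y hxy, div_eq_iff (hϱ0 _), tailSum_eq_add_tailSum_succ hϱ (idx x), ← hxy]
  ring

theorem phiP_tailSum_slope_add_eq_zero (p : ℝ) (hϱ : Summable ϱ) (hϱ0 : ∀ n, ϱ n ≠ 0)
    (hr_symm : ∀ x y, r (x, y) = r (y, x)) (hr : ∀ x y, idx y = idx x + 1 → r (x, y) = ϱ (idx x))
    (C : ℝ) {x y z : α} (hy : idx y = idx x + 1) (hz : idx x = idx z + 1) :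
    phiP p ((C * tailSum ϱ (idx y) - C * tailSum ϱ (idx x)) / r (x, y)) +
      phiP p ((C * tailSum ϱ (idx z) - C * tailSum ϱ (idx x)) / r (x, z)) = 0 := by
  have hdown := tailSum_slope_of_succ hϱ hϱ0 hr C hz
  rw [hr_symm, ← neg_sub, neg_div] at hdown
  rw [tailSum_slope_of_succ hϱ hϱ0 hr C hy, neg_eq_iff_eq_neg.1 hdown, phiP_neg, neg_neg,
    neg_add_cancel]

end Slope

section CosetIndex

variable {k : ℕ} {i j : Fin (k + 1)} {ρ : G k →* Equiv.Perm ℤ}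

theorem exists_units_apply_eq_mul_add (hρi : ∀ n : ℤ, ρ (gen k i) n = 1 - n)
    (hρj : ∀ n : ℤ, ρ (gen k j) n = -1 - n)
    (hρs : ∀ s : Fin (k + 1), s ≠ i → s ≠ j → ρ (gen k s) = 1) (x : G k) :
    ∃ ε : ℤˣ, ∀ n, ρ x n = ε * n + ρ x 0 := by
  induction x using Submonoid.dense_induction _ (closure_range_gen k) with
  | mem x hx =>
    obtain ⟨s, rfl⟩ := hx
    by_cases hsi : s = i
    · subst hsi
      exact ⟨-1, fun n => by simp only [hρi]; push_cast; ring⟩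
    by_cases hsj : s = j
    · subst hsj
      exact ⟨-1, fun n => by simp only [hρj]; push_cast; ring⟩
    exact ⟨1, fun n => by simp [hρs s hsi hsj]⟩
  | one => exact ⟨1, fun n => by simp⟩
  | mul x y hx hy =>
    obtain ⟨ε, hε⟩ := hx
    obtain ⟨δ, hδ⟩ := hy
    refine ⟨ε * δ, fun n => ?_⟩
    rw [map_mul, Equiv.Perm.mul_apply, Equiv.Perm.mul_apply, hδ n, hε (δ * n + ρ y 0), hε (ρ y 0)]
    push_cast
    ring

theorem isPeriodic_comp_cosetIdx {H : Subgroup (G k)} (hH : H ≤ ρ.ker) (g : ℤ → ℝ) :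
    IsPeriodic k H (fun x => g (cosetIdx ρ x)) := by
  intro y hy x
  simp only [cosetIdx, map_mul, Equiv.Perm.mul_apply, MonoidHom.mem_ker.1 (hH hy),
    Equiv.Perm.one_apply]

theorem pLap_tailSum_cosetIdx_eq_zero {p : ℝ} {r : G k × G k → ℝ}
    (hr_symm : ∀ x y : G k, r (x, y) = r (y, x)) (hij : i ≠ j)
    (hρi : ∀ n : ℤ, ρ (gen k i) n = 1 - n) (hρj : ∀ n : ℤ, ρ (gen k j) n = -1 - n)
    (hρs : ∀ s : Fin (k + 1), s ≠ i → s ≠ j → ρ (gen k s) = 1) {ϱ : ℤ → ℝ}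
    (hϱ0 : ∀ n, ϱ n ≠ 0)
    (hrϱ : ∀ x y : G k, cosetIdx ρ y = cosetIdx ρ x + 1 → r (x, y) = ϱ (cosetIdx ρ x))
    (hϱ : Summable ϱ) (C : ℝ) (x : G k) :
    pLap k p r (fun x => C * tailSum ϱ (cosetIdx ρ x)) x = 0 := by
  obtain ⟨ε, hε⟩ := exists_units_apply_eq_mul_add hρi hρj hρs x
  have hnbr : ∀ s, cosetIdx ρ (x * gen k s) = ρ x (ρ (gen k s) 0) := fun s => by
    simp [cosetIdx]
  have hi : cosetIdx ρ (x * gen k i) = cosetIdx ρ x + ε := by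
    rw [hnbr, hρi, hε, cosetIdx]; ring
  have hj : cosetIdx ρ (x * gen k j) = cosetIdx ρ x - ε := by
    rw [hnbr, hρj, hε, cosetIdx]; ring
  rw [pLap, Finset.sum_eq_add_of_mem i j (Finset.mem_univ _) (Finset.mem_univ _) hij]
  · rcases Int.units_eq_one_or ε with rfl | rfl
    · exact phiP_tailSum_slope_add_eq_zero p hϱ hϱ0 hr_symm hrϱ C
        (by rw [hi]; simp) (by rw [hj]; simp)
    · rw [add_comm]
      exact phiP_tailSum_slope_add_eq_zero p hϱ hϱ0 hr_symm hrϱ C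
        (by rw [hj]; simp) (by rw [hi]; simp)
  · rintro s - ⟨hsi, hsj⟩
    rw [hnbr, hρs s hsi hsj]
    simp [phiP, cosetIdx]

end CosetIndex

theorem stmt9_general (k : ℕ) (p : ℝ)
    (r : G k × G k → ℝ) (hr_symm : ∀ x y : G k, r (x, y) = r (y, x))
    (i j : Fin (k + 1)) (hij : i ≠ j)
    (ρ : G k →* Equiv.Perm ℤ)
    (hρi : ∀ n : ℤ, ρ (gen k i) n = 1 - n)
    (hρj : ∀ n : ℤ, ρ (gen k j) n = -1 - n)
    (hρs : ∀ s : Fin (k + 1), s ≠ i → s ≠ j → ρ (gen k s) = 1)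
    (f : G k →* G k)
    (hfi : f (gen k i) = gen k i) (hfj : f (gen k j) = gen k j)
    (hfs : ∀ s : Fin (k + 1), s ≠ i → s ≠ j → f (gen k s) = 1)
    (ϱ : ℤ → ℝ) (hϱ_pos : ∀ n : ℤ, 0 < ϱ n)
    (hrϱ : ∀ x y : G k, cosetIdx ρ y = cosetIdx ρ x + 1 → r (x, y) = ϱ (cosetIdx ρ x))
    (hϱ_sum : Summable ϱ)
    (C : ℝ) :
    IsPeriodic k f.ker (fun x => C * (∑' s : {m : ℤ // cosetIdx ρ x ≤ m}, ϱ s)) ∧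
      ∀ x : G k, pLap k p r (fun x => C * (∑' s : {m : ℤ // cosetIdx ρ x ≤ m}, ϱ s)) x = 0 := by
  have hρf : ρ.comp f = ρ := MonoidHom.eq_of_eqOn_denseM (closure_range_gen k) <| by
    rintro _ ⟨s, rfl⟩
    by_cases hsi : s = i
    · simp [hsi, hfi]
    by_cases hsj : s = j
    · simp [hsj, hfj]
    simp [hfs s hsi hsj, hρs s hsi hsj]
  have hker : f.ker ≤ ρ.ker := by
    rw [← hρf, ← MonoidHom.comap_ker]
    exact MonoidHom.ker_le_comap f _
  exact ⟨isPeriodic_comp_cosetIdx hker (fun n => C * tailSum ϱ n),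
    pLap_tailSum_cosetIdx_eq_zero hr_symm hij hρi hρj hρs (fun n => (hϱ_pos n).ne') hrϱ hϱ_sum C⟩

theorem stmt9 (k : ℕ) (hk : 1 ≤ k) (p : ℝ) (hp1 : 1 < p)
    (r : G k × G k → ℝ) (hr_symm : ∀ x y : G k, r (x, y) = r (y, x)) (hr_pos : ∀ x y : G k, 0 < r (x, y))
    (i j : Fin (k + 1)) (hij : i ≠ j)
    (ρ : G k →* Equiv.Perm ℤ)
    (hρi : ∀ n : ℤ, ρ (gen k i) n = 1 - n)
    (hρj : ∀ n : ℤ, ρ (gen k j) n = -1 - n)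
    (hρs : ∀ s : Fin (k + 1), s ≠ i → s ≠ j → ρ (gen k s) = 1)
    (f : G k →* G k)
    (hfi : f (gen k i) = gen k i) (hfj : f (gen k j) = gen k j)
    (hfs : ∀ s : Fin (k + 1), s ≠ i → s ≠ j → f (gen k s) = 1)
    (ϱ : ℤ → ℝ) (hϱ_pos : ∀ n : ℤ, 0 < ϱ n)
    (hrϱ : ∀ x y : G k, cosetIdx ρ y = cosetIdx ρ x + 1 → r (x, y) = ϱ (cosetIdx ρ x))
    (hϱ_sum : Summable ϱ)
    (C : ℝ) (hC : 0 ≤ C) :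
    IsPeriodic k f.ker (fun x => C * (∑' s : {m : ℤ // cosetIdx ρ x ≤ m}, ϱ s)) ∧
      ∀ x : G k, pLap k p r (fun x => C * (∑' s : {m : ℤ // cosetIdx ρ x ≤ m}, ϱ s)) x = 0 :=
  stmt9_general k p r hr_symm i j hij ρ hρi hρj hρs f hfi hfj hfs ϱ hϱ_pos hrϱ hϱ_sum C
end
end

section
/- Let $M \subseteq \{0,\dots,k\}$ and let $u : G_k \to \mathbb{R}$ be $H_M$-periodic. Then $u(x a_s) = u(x)$ for every $x \in G_k$ and every $s \notin M$, and consequently the $p$-Laplacian of $u$ reduces to a sum over $M$ only: $\Delta_p u(x) = \sum_{s \in M} \varphi_p\big((u(x a_s) - u(x)) / r(x, x a_s)\big)$ for every $x \in G_k$. (Hence describing $H_M$-periodic $p$-harmonic functions on the Cayley tree of order $k$ is equivalent to describing $p$-harmonic functions on a Cayley tree of order $|M| - 1$.) -/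
open scoped BigOperators

noncomputable section

theorem phiP_zero (p : ℝ) : phiP p 0 = 0 := by
  simp [phiP]

theorem pLap_eq_sum_of_forall_notMem {k : ℕ} (p : ℝ) (r : G k × G k → ℝ) {u : G k → ℝ}
    {x : G k} (M : Finset (Fin (k + 1))) (hM : ∀ s ∉ M, u (x * gen k s) = u x) :
    pLap k p r u x = ∑ s ∈ M, phiP p ((u (x * gen k s) - u x) / r (x, x * gen k s)) := by
  refine (Finset.sum_subset (Finset.subset_univ M) fun s _ hs => ?_).symm
  rw [hM s hs, sub_self, zero_div, phiP_zero]

/-- `x * g = (x * g * x⁻¹) * x`, and `x * g * x⁻¹ ∈ H` by normality. -/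
theorem apply_mul_eq_of_forall_mem_apply_mul_eq {Γ β : Type*} [Group Γ] {H : Subgroup Γ}
    [H.Normal] {u : Γ → β} (hu : ∀ y ∈ H, ∀ x, u (y * x) = u x) {g : Γ} (hg : g ∈ H) (x : Γ) :
    u (x * g) = u x := by
  simpa using hu _ (‹H.Normal›.conj_mem g hg x) x

theorem stmt16_general (k : ℕ) (p : ℝ)
    (r : G k × G k → ℝ)
    (M : Finset (Fin (k + 1)))
    (f : G k →* G k)
    (hf : ∀ s : Fin (k + 1), f (gen k s) = if s ∈ M then gen k s else 1)
    (u : G k → ℝ) (hu_per : IsPeriodic k f.ker u) :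
    (∀ x : G k, ∀ s : Fin (k + 1), s ∉ M → u (x * gen k s) = u x) ∧
      ∀ x : G k, pLap k p r u x =
        ∑ s ∈ M, phiP p ((u (x * gen k s) - u x) / r (x, x * gen k s)) := by
  have invariant : ∀ x : G k, ∀ s : Fin (k + 1), s ∉ M → u (x * gen k s) = u x :=
    fun x s hs => apply_mul_eq_of_forall_mem_apply_mul_eq hu_per (by simp [hf s, hs]) x
  exact ⟨invariant, fun x => pLap_eq_sum_of_forall_notMem p r M (invariant x)⟩

theorem stmt16 (k : ℕ) (hk : 1 ≤ k) (p : ℝ) (hp1 : 1 < p)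
    (r : G k × G k → ℝ) (hr_symm : ∀ x y : G k, r (x, y) = r (y, x)) (hr_pos : ∀ x y : G k, 0 < r (x, y))
    (M : Finset (Fin (k + 1)))
    (f : G k →* G k)
    (hf : ∀ s : Fin (k + 1), f (gen k s) = if s ∈ M then gen k s else 1)
    (u : G k → ℝ) (hu_per : IsPeriodic k f.ker u) :
    (∀ x : G k, ∀ s : Fin (k + 1), s ∉ M → u (x * gen k s) = u x) ∧
      ∀ x : G k, pLap k p r u x =
        ∑ s ∈ M, phiP p ((u (x * gen k s) - u x) / r (x, x * gen k s)) :=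
  stmt16_general k p r M f hf u hu_per
end
end
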